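/- arXiv:1902.08288 — 2 statements merged into one kernel-verified Lean document; each statement's English description precedes it below -/
import Mathlib

section
/- Let A ∈ ℝ^{n×n}, B ∈ ℝ^{n×m}, C ∈ ℝ^{p×n}, D ∈ ℝ^{p×m}, A_m ∈ ℝ^{k×k}, B_m, C_m, D_m of compatible dimensions, and define 𝒜 = [[A, B C_m],[0, A_m]] and 𝒞 = [C, D C_m]. Suppose (A, C) and (A_m, C_m) are detectable (i.e., [A-λI; C] has full column rank for every λ with Re(λ) ≥ 0, and likewise for (A_m, C_m)), and suppose [[A-λI, B],[C, D]] has full column rank for every eigenvalue λ of A_m with Re(λ) ≥ 0. Then (𝒜, 𝒞) is detectable, i.e., [𝒜-λI; 𝒞] has full column rank for every λ ∈ ℂ with Re(λ) ≥ 0. -/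
open Matrix

/-- A matrix has full column rank iff its kernel (via `mulVec`) is trivial. -/
def FullColRank {m n : Type*} [Fintype n] (M : Matrix m n ℂ) : Prop :=
  ∀ x : n → ℂ, M *ᵥ x = 0 → x = 0

theorem augmented_pair_detectable
    {n k p nw : ℕ}
    (A : Matrix (Fin n) (Fin n) ℝ) (B : Matrix (Fin n) (Fin nw) ℝ)
    (C : Matrix (Fin p) (Fin n) ℝ) (D : Matrix (Fin p) (Fin nw) ℝ)
    (Am : Matrix (Fin k) (Fin k) ℝ) (Cm : Matrix (Fin nw) (Fin k) ℝ)
    (hAC : ∀ lam : ℂ, 0 ≤ lam.re →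
      FullColRank (fromRows (A.map Complex.ofReal - lam • 1) (C.map Complex.ofReal)))
    (hAmCm : ∀ lam : ℂ, 0 ≤ lam.re →
      FullColRank (fromRows (Am.map Complex.ofReal - lam • 1) (Cm.map Complex.ofReal)))
    (hRank : ∀ lam : ℂ, 0 ≤ lam.re →
      (∃ w : Fin k → ℂ, w ≠ 0 ∧ (Am.map Complex.ofReal) *ᵥ w = lam • w) →
      FullColRank (fromBlocks (A.map Complex.ofReal - lam • 1) (B.map Complex.ofReal)
        (C.map Complex.ofReal) (D.map Complex.ofReal))) :
    ∀ lam : ℂ, 0 ≤ lam.re →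
      FullColRank (fromRows
        ((fromBlocks A (B * Cm) 0 Am).map Complex.ofReal - lam • 1)
        ((fromCols C (D * Cm)).map Complex.ofReal)) := by
  intro lam hlam x hx
  set x1 : Fin n → ℂ := x ∘ Sum.inl with hx1def
  set x2 : Fin k → ℂ := x ∘ Sum.inr with hx2def
  -- rewrite the block structure
  have hmap : (fromBlocks A (B * Cm) 0 Am).map Complex.ofReal - lam • 1 =
      fromBlocks (A.map Complex.ofReal - lam • 1)
        (B.map Complex.ofReal * Cm.map Complex.ofReal)
        0 (Am.map Complex.ofReal - lam • 1) := by
    have h2 : (B * Cm).map Complex.ofReal =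
        B.map Complex.ofReal * Cm.map Complex.ofReal := by
      ext i j; simp only [Matrix.map_apply, Matrix.mul_apply]; push_cast; rfl
    ext (i | i) (j | j) <;>
      simp [fromBlocks, Matrix.one_apply, Matrix.sub_apply, Matrix.smul_apply, Matrix.map_apply, ← h2]
  have hcols : (fromCols C (D * Cm)).map Complex.ofReal =
      fromCols (C.map Complex.ofReal)
        (D.map Complex.ofReal * Cm.map Complex.ofReal) := by
    have h2 : (D * Cm).map Complex.ofReal =
        D.map Complex.ofReal * Cm.map Complex.ofReal := by
      ext i j; simp only [Matrix.map_apply, Matrix.mul_apply]; push_cast; rfl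
    ext i (j | j) <;> simp [fromCols, Matrix.map_apply, ← h2]
  rw [fromRows_mulVec, hmap, hcols] at hx
  have hxelim : x = Sum.elim x1 x2 := by ext (i | i) <;> rfl
  rw [fromBlocks_mulVec] at hx
  have htop := congrFun hx
  have eq1 : (A.map Complex.ofReal - lam • 1) *ᵥ x1 +
      (B.map Complex.ofReal * Cm.map Complex.ofReal) *ᵥ x2 = 0 := by
    ext i; simpa using congrFun hx (Sum.inl (Sum.inl i))
  have eq2 : (Am.map Complex.ofReal - lam • 1) *ᵥ x2 = 0 := by
    ext i
    have := congrFun hx (Sum.inl (Sum.inr i))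
    simpa [zero_mulVec] using this
  have eq3 : C.map Complex.ofReal *ᵥ x1 +
      (D.map Complex.ofReal * Cm.map Complex.ofReal) *ᵥ x2 = 0 := by
    ext i
    have := congrFun hx (Sum.inr i)
    rw [hxelim] at this
    simpa [fromCols_mulVec_sumElim] using this
  have hx2 : x2 = 0 := by
    by_contra hne
    have heig : (Am.map Complex.ofReal) *ᵥ x2 = lam • x2 := by
      have := eq2
      rw [sub_mulVec, sub_eq_zero] at this
      simpa [smul_mulVec] using this
    have hfr := hRank lam hlam ⟨x2, hne, heig⟩
    have hzero : fromBlocks (A.map Complex.ofReal - lam • 1) (B.map Complex.ofReal)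
        (C.map Complex.ofReal) (D.map Complex.ofReal) *ᵥ
        Sum.elim x1 (Cm.map Complex.ofReal *ᵥ x2) = 0 := by
      rw [fromBlocks_mulVec]
      ext (i | i)
      · simpa [mulVec_mulVec] using congrFun eq1 i
      · simpa [mulVec_mulVec] using congrFun eq3 i
    have := hfr _ hzero
    have hCmx2 : Cm.map Complex.ofReal *ᵥ x2 = 0 := by
      ext i; simpa using congrFun this (Sum.inr i)
    have : x2 = 0 := by
      apply hAmCm lam hlam
      rw [fromRows_mulVec]
      ext (i | i)
      · simpa using congrFun eq2 i
      · simpa using congrFun hCmx2 i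
    exact hne this
  have hx1 : x1 = 0 := by
    apply hAC lam hlam
    rw [fromRows_mulVec]
    ext (i | i)
    · have := congrFun eq1 i
      simpa [hx2, mulVec_zero] using this
    · have := congrFun eq3 i
      simpa [hx2, mulVec_zero] using this
  rw [hxelim, hx1, hx2]
  ext (i | i) <;> rfl
end

section
/- Let λ ∈ ℂ and suppose x ∈ ℂⁿ, x_m ∈ ℂᵏ satisfy (A - λI)x + B C_m x_m = 0, C x + D C_m x_m = 0, and (A_m - λI) x_m = 0, with (x, x_m) ≠ 0. If x_m = 0, then λ is an eigenvalue of A and [A - λI; C] fails to have full column rank. If x_m ≠ 0 and C_m x_m = 0, then [A_m - λI; C_m] fails to have full column rank. If C_m x_m ≠ 0, then λ is an eigenvalue of A_m and [[A-λI, B],[C, D]] fails to have full column rank. -/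
open Matrix

theorem pbh_kernel_case_analysis
    {n k p nw : ℕ} (lam : ℂ)
    (A : Matrix (Fin n) (Fin n) ℂ) (B : Matrix (Fin n) (Fin nw) ℂ)
    (C : Matrix (Fin p) (Fin n) ℂ) (D : Matrix (Fin p) (Fin nw) ℂ)
    (Am : Matrix (Fin k) (Fin k) ℂ) (Cm : Matrix (Fin nw) (Fin k) ℂ)
    (x : Fin n → ℂ) (xm : Fin k → ℂ)
    (h1 : (A - lam • 1) *ᵥ x + (B * Cm) *ᵥ xm = 0)
    (h2 : C *ᵥ x + (D * Cm) *ᵥ xm = 0)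
    (h3 : (Am - lam • 1) *ᵥ xm = 0)
    (hne : ¬(x = 0 ∧ xm = 0)) :
    (xm = 0 →
      (∃ w : Fin n → ℂ, w ≠ 0 ∧ A *ᵥ w = lam • w) ∧
      ¬ FullColRank (fromRows (A - lam • 1) C)) ∧
    (xm ≠ 0 → Cm *ᵥ xm = 0 →
      ¬ FullColRank (fromRows (Am - lam • 1) Cm)) ∧
    (Cm *ᵥ xm ≠ 0 →
      (∃ w : Fin k → ℂ, w ≠ 0 ∧ Am *ᵥ w = lam • w) ∧
      ¬ FullColRank (fromBlocks (A - lam • 1) B C D)) := by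
  have eig : ∀ {m : ℕ} (M : Matrix (Fin m) (Fin m) ℂ) (v : Fin m → ℂ),
      (M - lam • 1) *ᵥ v = 0 → M *ᵥ v = lam • v := by
    intro m M v hv
    have := hv
    rw [sub_mulVec, sub_eq_zero] at this
    simpa [smul_mulVec] using this
  refine ⟨?_, ?_, ?_⟩
  · intro hxm
    subst hxm
    have hx0 : x ≠ 0 := fun h => hne ⟨h, rfl⟩
    have hAx : (A - lam • 1) *ᵥ x = 0 := by simpa using h1
    have hCx : C *ᵥ x = 0 := by simpa using h2
    refine ⟨⟨x, hx0, eig A x hAx⟩, fun hfc => hx0 (hfc x ?_)⟩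
    rw [fromRows_mulVec, hAx, hCx]
    ext (i | i) <;> rfl
  · intro hxm hCm hfc
    refine hxm (hfc xm ?_)
    rw [fromRows_mulVec, h3, hCm]
    ext (i | i) <;> rfl
  · intro hCm
    have hxm : xm ≠ 0 := fun h => hCm (by simp [h])
    refine ⟨⟨xm, hxm, eig Am xm h3⟩, fun hfc => ?_⟩
    have := hfc (Sum.elim x (Cm *ᵥ xm)) ?_
    · exact hCm (by funext i; exact congrFun this (Sum.inr i))
    · rw [fromBlocks_mulVec]
      have e1 : (A - lam • 1) *ᵥ x + B *ᵥ (Cm *ᵥ xm) = 0 := by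
        simpa [mulVec_mulVec] using h1
      have e2 : C *ᵥ x + D *ᵥ (Cm *ᵥ xm) = 0 := by
        simpa [mulVec_mulVec] using h2
      simp only [Sum.elim_comp_inl, Sum.elim_comp_inr, e1, e2]
      ext (i | i) <;> rfl
end
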